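/- Let c be a normalized order-preserving 3-coboundary, c = δ²d with d ∈ C²_≤(T¹, A¹). Define u(t) = d(t, t⁻¹)⁻¹ and d̃ = d · δ¹u. Then d̃ is a strongly normalized order-preserving 2-cochain with δ²d̃ = c; in particular d̃(e, t) = θ(e t t⁻¹) and d̃(t, e) = θ(t e t⁻¹) for all t ∈ T, e ∈ E(T). -/

import Mathlib

/-! Correcting `d` by the coboundary `δ¹u` leaves `δ²d = c` unchanged: in the commutative
inverse semigroup `A` the factors of `δ²δ¹u` cancel in pairs up to the idempotent
`θ (r (x y z))`, which `c` absorbs. The corrected cochain `d̃` is again order-preserving with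
the same support, and `d̃ (e, e) = θ e`. Order preservation gives `d̃ (e, e t) = d̃ (e, t)` and
`d̃ (t e, e) = d̃ (t, e)`, so the normalization of `c` at `(e, e, t)` and `(t, e, e)` reads
`d̃ (e, t) = θ (r (e t))` and `d̃ (t, e) = θ (r (t e))`. -/

/-- An inverse semigroup: every element `s` has a (unique) inverse `s⁻¹`
with `s * s⁻¹ * s = s` and `s⁻¹ * s * s⁻¹ = s⁻¹`. -/
class InverseSemigroup (S : Type*) extends Semigroup S, Inv S where
  mul_inv_mul : ∀ s : S, s * s⁻¹ * s = s
  inv_mul_inv : ∀ s : S, s⁻¹ * s * s⁻¹ = s⁻¹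
  inv_unique : ∀ s t : S, s * t * s = s → t * s * t = t → t = s⁻¹

namespace InverseSemigroup

/-- The set of idempotents of a multiplicative structure. -/
def E (S : Type*) [Mul S] : Set S := {e | e * e = e}

/-- The natural partial order: `s ≤ t` iff `s = s * s⁻¹ * t`. -/
def nle {S : Type*} [Mul S] [Inv S] (s t : S) : Prop := s = s * s⁻¹ * t

/-- `r s = s * s⁻¹`. -/
def r {S : Type*} [Mul S] [Inv S] (s : S) : S := s * s⁻¹

/-- A Clifford semigroup (semilattice of groups): idempotents are central. -/
def IsClifford (S : Type*) [Mul S] : Prop := ∀ e ∈ E S, ∀ s : S, e * s = s * e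

end InverseSemigroup

open InverseSemigroup

namespace InverseSemigroup

variable {S : Type*} [InverseSemigroup S]

theorem mul_self_of_mem_E {e : S} (he : e ∈ E S) : e * e = e := he

protected theorem inv_inv (s : S) : s⁻¹⁻¹ = s :=
  (inv_unique s⁻¹ s (inv_mul_inv s) (mul_inv_mul s)).symm

theorem inv_eq_self_of_mem_E {e : S} (he : e ∈ E S) : e⁻¹ = e := by
  have he : e * e = e := he
  exact (inv_unique e e (by rw [he, he]) (by rw [he, he])).symm

theorem r_mem_E (s : S) : r s ∈ E S := by
  show s * s⁻¹ * (s * s⁻¹) = s * s⁻¹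
  rw [← mul_assoc, mul_inv_mul]

theorem inv_mul_self_mem_E (s : S) : s⁻¹ * s ∈ E S := by
  simpa only [r, InverseSemigroup.inv_inv] using r_mem_E s⁻¹

/-- The classical argument: `f (e f)⁻¹ e` is an inverse of `e f`, hence equals `(e f)⁻¹`,
which is then idempotent and so equal to its own inverse `e f`. -/
theorem mul_mem_E {e f : S} (he : e ∈ E S) (hf : f ∈ E S) : e * f ∈ E S := by
  have he : ∀ a, e * (e * a) = e * a := fun a => by rw [← mul_assoc, mul_self_of_mem_E he]
  have hf : ∀ a, f * (f * a) = f * a := fun a => by rw [← mul_assoc, mul_self_of_mem_E hf]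
  set x := (e * f)⁻¹
  have h₁ : e * (f * (x * (e * f))) = e * f := by simpa only [mul_assoc] using mul_inv_mul (e * f)
  have h₂ : ∀ a, x * (e * (f * (x * a))) = x * a := fun a => by
    simpa only [mul_assoc] using congrArg (· * a) (inv_mul_inv (e * f))
  have hx : f * (x * e) = x := by
    simpa only [mul_assoc] using
      inv_unique (e * f) (f * x * e) (by simp only [mul_assoc, he, hf, h₁])
        (by simp only [mul_assoc, he, hf, h₂])
  have hxx : x * x = x := by
    calc x * x = f * (x * e) * (f * (x * e)) := by rw [hx]
      _ = f * (x * (e * (f * (x * e)))) := by simp only [mul_assoc]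
      _ = x := by rw [h₂, hx]
  have hex : e * f = x := by
    rw [← InverseSemigroup.inv_inv (e * f)]
    exact inv_eq_self_of_mem_E hxx
  show e * f * (e * f) = e * f
  rw [hex, hxx]

theorem mul_comm_of_mem_E {e f : S} (he : e ∈ E S) (hf : f ∈ E S) : e * f = f * e := by
  have hef : e * f * (e * f) = e * f := mul_mem_E he hf
  have hfe : f * e * (f * e) = f * e := mul_mem_E hf he
  have h : f * e = (e * f)⁻¹ := by
    refine inv_unique (e * f) (f * e) ?_ ?_
    · calc e * f * (f * e) * (e * f) = e * (f * f) * (e * e) * f := by simp only [mul_assoc]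
        _ = e * f := by
          rw [mul_self_of_mem_E he, mul_self_of_mem_E hf]; simpa only [mul_assoc] using hef
    · calc f * e * (e * f) * (f * e) = f * (e * e) * (f * f) * e := by simp only [mul_assoc]
        _ = f * e := by
          rw [mul_self_of_mem_E he, mul_self_of_mem_E hf]; simpa only [mul_assoc] using hfe
  rw [h, inv_eq_self_of_mem_E (mul_mem_E he hf)]

protected theorem mul_inv_rev (s t : S) : (s * t)⁻¹ = t⁻¹ * s⁻¹ := by
  have hcomm := mul_comm_of_mem_E (r_mem_E t) (inv_mul_self_mem_E s)
  simp only [r] at hcomm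
  refine (inv_unique (s * t) (t⁻¹ * s⁻¹) ?_ ?_).symm
  · calc s * t * (t⁻¹ * s⁻¹) * (s * t) = s * (t * t⁻¹ * (s⁻¹ * s)) * t := by
          simp only [mul_assoc]
      _ = s * t := by
          rw [hcomm]; simp only [← mul_assoc, mul_inv_mul]
          rw [mul_assoc s t, mul_assoc s, mul_inv_mul]
  · calc t⁻¹ * s⁻¹ * (s * t) * (t⁻¹ * s⁻¹) = t⁻¹ * (s⁻¹ * s * (t * t⁻¹)) * s⁻¹ := by
          simp only [mul_assoc]
      _ = t⁻¹ * s⁻¹ := by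
          rw [← hcomm]; simp only [← mul_assoc, inv_mul_inv]
          rw [mul_assoc t⁻¹ s⁻¹, mul_assoc t⁻¹, inv_mul_inv]

theorem r_of_mem_E {e : S} (he : e ∈ E S) : r e = e := by
  rw [r, inv_eq_self_of_mem_E he, mul_self_of_mem_E he]

theorem r_mul_inv_self (s : S) : r (s * s⁻¹) = r s := r_of_mem_E (r_mem_E s)

theorem r_mul_mul_r (s t : S) : r (s * t) * r s = r (s * t) := by
  simp only [r, InverseSemigroup.mul_inv_rev, mul_assoc]
  rw [← mul_assoc s⁻¹ s s⁻¹, inv_mul_inv]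

theorem mul_r_mul_inv (s t : S) : s * r t * s⁻¹ = r (s * t) := by
  simp only [r, InverseSemigroup.mul_inv_rev, mul_assoc]

theorem r_idem_mul {e : S} (he : e ∈ E S) (t : S) : r (e * t) = e * r t := by
  rw [r, InverseSemigroup.mul_inv_rev, inv_eq_self_of_mem_E he,
    show e * t * (t⁻¹ * e) = e * r t * e by simp only [r, mul_assoc],
    mul_assoc, ← mul_comm_of_mem_E he (r_mem_E t), ← mul_assoc, mul_self_of_mem_E he]

theorem mul_idem_eq_conj_mul (s : S) {e : S} (he : e ∈ E S) : s * e = s * e * s⁻¹ * s := by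
  rw [mul_assoc _ s⁻¹, mul_assoc, mul_comm_of_mem_E he (inv_mul_self_mem_E s), ← mul_assoc,
    ← mul_assoc, mul_inv_mul]

theorem conj_mem_E (s : S) {e : S} (he : e ∈ E S) : s * e * s⁻¹ ∈ E S := by
  show s * e * s⁻¹ * (s * e * s⁻¹) = s * e * s⁻¹
  rw [← mul_assoc, ← mul_assoc _ s e, ← mul_idem_eq_conj_mul s he, mul_assoc s e e,
    mul_self_of_mem_E he]

theorem nle_of_eq_idem_mul {e s t : S} (he : e ∈ E S) (h : s = e * t) : nle s t := by
  rw [nle, h, show e * t * (e * t)⁻¹ = r (e * t) from rfl, r_idem_mul he, mul_assoc, r,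
    mul_inv_mul]

theorem nle_refl (s : S) : nle s s := (mul_inv_mul s).symm

theorem nle_idem_mul {e : S} (he : e ∈ E S) (t : S) : nle (e * t) t :=
  nle_of_eq_idem_mul he rfl

theorem nle_mul_idem {e : S} (he : e ∈ E S) (t : S) : nle (t * e) t :=
  nle_of_eq_idem_mul (conj_mem_E t he) (mul_idem_eq_conj_mul t he)

theorem nle_idem_mul_of_nle {e s t : S} (he : e ∈ E S) (h : nle s t) : nle (e * s) t := by
  refine nle_of_eq_idem_mul (mul_mem_E he (r_mem_E s)) ?_
  rw [mul_assoc, ← show s = r s * t from h]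

theorem nle_mul {s s' t t' : S} (hs : nle s s') (ht : nle t t') : nle (s * t) (s' * t') := by
  refine nle_of_eq_idem_mul (mul_mem_E (r_mem_E s) (conj_mem_E s' (r_mem_E t))) ?_
  have hs : s = r s * s' := hs
  have ht : t = r t * t' := ht
  calc s * t = r s * (s' * r t) * t' := by rw [← mul_assoc, ← hs, mul_assoc, ← ht]
    _ = r s * (s' * r t * s'⁻¹) * (s' * t') := by
      conv_lhs => rw [mul_idem_eq_conj_mul s' (r_mem_E t)]
      simp only [mul_assoc]

theorem nle_inv {s t : S} (h : nle s t) : nle s⁻¹ t⁻¹ := by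
  refine nle_of_eq_idem_mul (conj_mem_E t⁻¹ (r_mem_E s)) ?_
  have hs : s = r s * t := h
  rw [← mul_idem_eq_conj_mul t⁻¹ (r_mem_E s)]
  conv_lhs => rw [hs, InverseSemigroup.mul_inv_rev, inv_eq_self_of_mem_E (r_mem_E s)]

theorem eq_of_nle_of_r_eq {s t : S} (h : nle s t) (hr : r s = r t) : s = t := by
  rw [nle, show s * s⁻¹ = r s from rfl, hr, r, mul_inv_mul] at h
  exact h

theorem nle_map {S' : Type*} [InverseSemigroup S'] {φ : S → S'}
    (hφ : ∀ a b, φ (a * b) = φ a * φ b) {s t : S} (h : nle s t) : nle (φ s) (φ t) := by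
  have hE : φ (r s) ∈ E S' := by
    show φ (r s) * φ (r s) = φ (r s)
    rw [← hφ, mul_self_of_mem_E (r_mem_E s)]
  refine nle_of_eq_idem_mul hE ?_
  rw [← hφ, ← show s = r s * t from h]

theorem mul_inv_of_comm (hS : ∀ a b : S, a * b = b * a) (a b : S) : (a * b)⁻¹ = a⁻¹ * b⁻¹ := by
  rw [InverseSemigroup.mul_inv_rev, hS]

theorem r_mul_of_comm (hS : ∀ a b : S, a * b = b * a) (a b : S) : r (a * b) = r a * r b := by
  simp only [r, mul_inv_of_comm hS, mul_assoc]
  rw [← mul_assoc b, hS b a⁻¹, mul_assoc]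

theorem r_inv_of_comm (hS : ∀ a b : S, a * b = b * a) (a : S) : r a⁻¹ = r a := by
  rw [r, InverseSemigroup.inv_inv, hS, r]

theorem mul_r_of_comm (hS : ∀ a b : S, a * b = b * a) (a : S) : a * r a = a := by
  rw [hS, r, mul_inv_mul]

theorem mul_eq_self_of_r_mul_eq (hS : ∀ a b : S, a * b = b * a) {a f : S} (h : r a * f = r a) :
    a * f = a := by
  rw [← mul_r_of_comm hS a, mul_assoc, h]

end InverseSemigroup

section

variable {T A : Type*} [InverseSemigroup T] [InverseSemigroup A]

structure IsModuleStructure (θ : T → A) (η : T → A → A) : Prop where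
  mul_comm : ∀ a b : A, a * b = b * a
  θ_mem_E : ∀ e ∈ E T, θ e ∈ E A
  θ_mul : ∀ e ∈ E T, ∀ f ∈ E T, θ (e * f) = θ e * θ f
  η_comp : ∀ s t : T, ∀ a : A, η (s * t) a = η s (η t a)
  η_mul : ∀ t : T, ∀ a b : A, η t (a * b) = η t a * η t b
  η_idem : ∀ e ∈ E T, ∀ a : A, η e a = θ e * a
  η_θ : ∀ t : T, ∀ e ∈ E T, η t (θ e) = θ (t * e * t⁻¹)

namespace IsModuleStructure

variable {θ : T → A} {η : T → A → A}

theorem η_inv (hM : IsModuleStructure θ η) (t : T) (a : A) : (η t a)⁻¹ = η t a⁻¹ :=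
  (inv_unique _ _ (by rw [← hM.η_mul, ← hM.η_mul, mul_inv_mul])
    (by rw [← hM.η_mul, ← hM.η_mul, inv_mul_inv])).symm

theorem r_η (hM : IsModuleStructure θ η) (t : T) (a : A) : r (η t a) = η t (r a) := by
  rw [r, hM.η_inv, ← hM.η_mul, r]

theorem θ_r_mul_self (hM : IsModuleStructure θ η) (s : T) : θ (r s) * θ (r s) = θ (r s) :=
  hM.θ_mem_E _ (r_mem_E s)

theorem θ_r_mul_θ_r (hM : IsModuleStructure θ η) (s t : T) :
    θ (r (s * t)) * θ (r s) = θ (r (s * t)) := by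
  rw [← hM.θ_mul _ (r_mem_E _) _ (r_mem_E _), r_mul_mul_r]

theorem η_θ_r (hM : IsModuleStructure θ η) (s t : T) : η s (θ (r t)) = θ (r (s * t)) := by
  rw [hM.η_θ _ _ (r_mem_E t), mul_r_mul_inv]

theorem η_nle (hM : IsModuleStructure θ η) {s s' : T} {a a' : A} (hs : nle s s') (ha : nle a a') :
    nle (η s a) (η s' a') := by
  have h : η s a = θ (r s) * η s' a := by
    rw [← hM.η_idem _ (r_mem_E s), ← hM.η_comp, ← show s = r s * s' from hs]
  rw [h]
  exact nle_idem_mul_of_nle (hM.θ_mem_E _ (r_mem_E s)) (nle_map (hM.η_mul s') ha)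

end IsModuleStructure

structure IsOrderPreserving1Cochain (θ : T → A) (u : T → A) : Prop where
  r_eq : ∀ t, r (u t) = θ (r t)
  mono : ∀ s t, nle s t → nle (u s) (u t)

structure IsOrderPreserving2Cochain (θ : T → A) (d : T → T → A) : Prop where
  r_eq : ∀ x y, r (d x y) = θ (r (x * y))
  mono : ∀ x x' y y', nle x x' → nle y y' → nle (d x y) (d x' y')

def coboundary₁ (η : T → A → A) (u : T → A) (x y : T) : A :=
  η x (u y) * (u (x * y))⁻¹ * u x

def coboundary₂ (η : T → A → A) (d : T → T → A) (x y z : T) : A :=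
  η x (d y z) * (d (x * y) z)⁻¹ * d x (y * z) * (d x y)⁻¹

def invAtInv (d : T → T → A) (t : T) : A := (d t t⁻¹)⁻¹

def strongNormalize (η : T → A → A) (d : T → T → A) : T → T → A :=
  fun x y => d x y * coboundary₁ η (invAtInv d) x y

variable {θ : T → A} {η : T → A → A}

theorem IsOrderPreserving2Cochain.mul (hM : IsModuleStructure θ η) {d d' : T → T → A}
    (hd : IsOrderPreserving2Cochain θ d) (hd' : IsOrderPreserving2Cochain θ d') :
    IsOrderPreserving2Cochain θ (fun x y => d x y * d' x y) where
  r_eq x y := by rw [r_mul_of_comm hM.mul_comm, hd.r_eq, hd'.r_eq, hM.θ_r_mul_self]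
  mono x x' y y' hx hy := nle_mul (hd.mono _ _ _ _ hx hy) (hd'.mono _ _ _ _ hx hy)

theorem IsOrderPreserving2Cochain.invAtInv (hM : IsModuleStructure θ η) {d : T → T → A}
    (hd : IsOrderPreserving2Cochain θ d) : IsOrderPreserving1Cochain θ (invAtInv d) where
  r_eq t := by rw [_root_.invAtInv, r_inv_of_comm hM.mul_comm, hd.r_eq, r_mul_inv_self]
  mono s t h := nle_inv (hd.mono _ _ _ _ h (nle_inv h))

theorem IsOrderPreserving1Cochain.coboundary (hM : IsModuleStructure θ η) {u : T → A}
    (hu : IsOrderPreserving1Cochain θ u) : IsOrderPreserving2Cochain θ (coboundary₁ η u) where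
  r_eq x y := by
    simp only [coboundary₁, r_mul_of_comm hM.mul_comm, r_inv_of_comm hM.mul_comm, hM.r_η,
      hu.r_eq, hM.η_θ_r, hM.θ_r_mul_self, hM.θ_r_mul_θ_r]
  mono x x' y y' hx hy :=
    nle_mul (nle_mul (hM.η_nle hx (hu.mono _ _ hy)) (nle_inv (hu.mono _ _ (nle_mul hx hy))))
      (hu.mono _ _ hx)

theorem IsOrderPreserving2Cochain.strongNormalize (hM : IsModuleStructure θ η) {d : T → T → A}
    (hd : IsOrderPreserving2Cochain θ d) : IsOrderPreserving2Cochain θ (strongNormalize η d) :=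
  hd.mul hM ((hd.invAtInv hM).coboundary hM)

theorem coboundary₂_mul (hM : IsModuleStructure θ η) (d d' : T → T → A) (x y z : T) :
    coboundary₂ η (fun x y => d x y * d' x y) x y z =
      coboundary₂ η d x y z * coboundary₂ η d' x y z := by
  have : Std.Commutative (α := A) (· * ·) := ⟨hM.mul_comm⟩
  simp only [coboundary₂, hM.η_mul, mul_inv_of_comm hM.mul_comm]
  ac_rfl

theorem IsOrderPreserving2Cochain.r_coboundary₂ (hM : IsModuleStructure θ η) {d : T → T → A}
    (hd : IsOrderPreserving2Cochain θ d) (x y z : T) :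
    r (coboundary₂ η d x y z) = θ (r (x * y * z)) := by
  simp only [coboundary₂, r_mul_of_comm hM.mul_comm, r_inv_of_comm hM.mul_comm, hM.r_η, hd.r_eq,
    hM.η_θ_r, ← mul_assoc x y z, hM.θ_r_mul_self, hM.θ_r_mul_θ_r]

theorem IsOrderPreserving1Cochain.coboundary₂_coboundary₁ (hM : IsModuleStructure θ η)
    {u : T → A} (hu : IsOrderPreserving1Cochain θ u) (x y z : T) :
    coboundary₂ η (coboundary₁ η u) x y z = θ (r (x * y * z)) := by
  have : Std.Commutative (α := A) (· * ·) := ⟨hM.mul_comm⟩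
  have h : coboundary₂ η (coboundary₁ η u) x y z =
      r (u (x * y * z)) * r (η (x * y) (u z)) * r (η x (u (y * z))) *
        (r (u (x * y)) * r (η x (u y)) * r (u x)) := by
    simp only [coboundary₂, coboundary₁, r, hM.η_mul, hM.η_inv, ← hM.η_comp,
      mul_inv_of_comm hM.mul_comm, InverseSemigroup.inv_inv, ← mul_assoc x y z]
    ac_rfl
  simp only [h, hM.r_η, hu.r_eq, hM.η_θ_r, ← mul_assoc x y z, hM.θ_r_mul_self, hM.θ_r_mul_θ_r]

theorem coboundary₂_strongNormalize (hM : IsModuleStructure θ η) {d : T → T → A}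
    (hd : IsOrderPreserving2Cochain θ d) :
    coboundary₂ η (strongNormalize η d) = coboundary₂ η d := by
  funext x y z
  unfold strongNormalize
  rw [coboundary₂_mul hM, (hd.invAtInv hM).coboundary₂_coboundary₁ hM,
    ← hd.r_coboundary₂ hM, mul_r_of_comm hM.mul_comm]

theorem IsOrderPreserving2Cochain.eq_of_nle_of_r_eq {d : T → T → A}
    (hd : IsOrderPreserving2Cochain θ d) {x x' y y' : T} (hx : nle x x') (hy : nle y y')
    (h : r (x * y) = r (x' * y')) : d x y = d x' y' :=
  InverseSemigroup.eq_of_nle_of_r_eq (hd.mono _ _ _ _ hx hy) (by rw [hd.r_eq, hd.r_eq, h])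

theorem IsOrderPreserving2Cochain.apply_idem_left (hM : IsModuleStructure θ η) {d : T → T → A}
    (hd : IsOrderPreserving2Cochain θ d) {e : T} (he : e ∈ E T) (hdee : d e e = θ e) (t : T)
    (hc : coboundary₂ η d e e t = θ (r (e * t))) : d e t = θ (r (e * t)) := by
  have hee := mul_self_of_mem_E he
  have h₁ : d e (e * t) = d e t :=
    hd.eq_of_nle_of_r_eq (nle_refl e) (nle_idem_mul he t) (by rw [← mul_assoc, hee])
  have h₂ : d e t * θ e = d e t := by
    refine mul_eq_self_of_r_mul_eq hM.mul_comm ?_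
    rw [hd.r_eq]
    simpa only [r_of_mem_E he] using hM.θ_r_mul_θ_r e t
  calc d e t = θ e * d e t * (d e t)⁻¹ * d e t * θ e := by
        rw [mul_assoc (θ e), mul_assoc (θ e), mul_inv_mul, hM.mul_comm (θ e), h₂, h₂]
    _ = θ (r (e * t)) := by
        rw [← hc, coboundary₂, hee, h₁, hdee, hM.η_idem e he,
          inv_eq_self_of_mem_E (hM.θ_mem_E e he)]

theorem IsOrderPreserving2Cochain.apply_idem_right (hM : IsModuleStructure θ η) {d : T → T → A}
    (hd : IsOrderPreserving2Cochain θ d) {e : T} (he : e ∈ E T) (hdee : d e e = θ e) (t : T)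
    (hc : coboundary₂ η d t e e = θ (r (t * e))) : d t e = θ (r (t * e)) := by
  have hee := mul_self_of_mem_E he
  have h₁ : d (t * e) e = d t e :=
    hd.eq_of_nle_of_r_eq (nle_mul_idem he t) (nle_refl e) (by rw [mul_assoc, hee])
  have hθ : η t (θ e) = θ (r (t * e)) := by rw [← hM.η_θ_r, r_of_mem_E he]
  have h₂ : θ (r (t * e)) * (d t e)⁻¹ = (d t e)⁻¹ := by
    rw [hM.mul_comm]
    refine mul_eq_self_of_r_mul_eq hM.mul_comm ?_
    rw [r_inv_of_comm hM.mul_comm, hd.r_eq, hM.θ_r_mul_self]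
  have hinv : (d t e)⁻¹ = θ (r (t * e)) := by
    calc (d t e)⁻¹ = θ (r (t * e)) * ((d t e)⁻¹ * d t e * (d t e)⁻¹) := by rw [inv_mul_inv, h₂]
      _ = coboundary₂ η d t e e := by
          rw [coboundary₂, hee, h₁, hdee, hθ]; simp only [mul_assoc]
      _ = θ (r (t * e)) := hc
  rw [← InverseSemigroup.inv_inv (d t e), hinv, inv_eq_self_of_mem_E (hM.θ_mem_E _ (r_mem_E _))]

theorem strongNormalize_apply_idem_idem (hM : IsModuleStructure θ η) {d : T → T → A}
    (hd : IsOrderPreserving2Cochain θ d) {e : T} (he : e ∈ E T) :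
    strongNormalize η d e e = θ e := by
  have hee := mul_self_of_mem_E he
  have hθu : θ e * invAtInv d e = invAtInv d e := by
    rw [hM.mul_comm]
    refine mul_eq_self_of_r_mul_eq hM.mul_comm ?_
    rw [(hd.invAtInv hM).r_eq, r_of_mem_E he, mul_self_of_mem_E (hM.θ_mem_E e he)]
  calc strongNormalize η d e e = d e e * (θ e * invAtInv d e) := by
        simp only [strongNormalize, coboundary₁]
        rw [hee, hM.η_idem e he, mul_assoc (θ e), mul_assoc (θ e), mul_inv_mul]
    _ = r (d e e) := by rw [hθu, invAtInv, inv_eq_self_of_mem_E he, r]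
    _ = θ e := by rw [hd.r_eq, hee, r_of_mem_E he]

end

theorem coboundary_of_strongly_normalized_general {T A : Type*}
    [InverseSemigroup T] [InverseSemigroup A]
    (θ : T → A) (η : T → A → A)
    (hAcomm : ∀ a b : A, a * b = b * a)
    (hθE : ∀ e ∈ E T, θ e ∈ E A)
    (hθmul : ∀ e ∈ E T, ∀ f ∈ E T, θ (e * f) = θ e * θ f)
    (hηhom : ∀ t u : T, ∀ a : A, η (t * u) a = η t (η u a))
    (hηmul : ∀ t : T, ∀ a b : A, η t (a * b) = η t a * η t b)
    (hη1 : ∀ e ∈ E T, ∀ a : A, η e a = θ e * a)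
    (hη2 : ∀ t : T, ∀ e ∈ E T, η t (θ e) = θ (t * e * t⁻¹))
    (d : T → T → A)
    (hd : ∀ x y : T, d x y * (d x y)⁻¹ = θ (r (x * y)))
    (hdop : ∀ x x' y y' : T, nle x x' → nle y y' → nle (d x y) (d x' y'))
    (c : T → T → T → A)
    (hcdef : ∀ x y z : T,
      c x y z = η x (d y z) * (d (x * y) z)⁻¹ * d x (y * z) * (d x y)⁻¹)
    (hnorm : ∀ x y : T, ∀ e ∈ E T,
      c e (e * x) y = θ (r (e * x * y)) ∧
      c (x * e) e (e * y) = θ (r (x * e * y)) ∧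
      c x (y * e) e = θ (r (x * y * e))) :
    let u : T → A := fun t => (d t t⁻¹)⁻¹
    let dt : T → T → A := fun x y => d x y * (η x (u y) * (u (x * y))⁻¹ * u x)
    (∀ x y : T, dt x y * (dt x y)⁻¹ = θ (r (x * y))) ∧
    (∀ x x' y y' : T, nle x x' → nle y y' → nle (dt x y) (dt x' y')) ∧
    (∀ t : T, ∀ e ∈ E T, dt e t = θ (r (e * t)) ∧ dt t e = θ (r (t * e))) ∧
    (∀ x y z : T,
      η x (dt y z) * (dt (x * y) z)⁻¹ * dt x (y * z) * (dt x y)⁻¹ = c x y z) := by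
  intro u dt
  have hM : IsModuleStructure θ η := ⟨hAcomm, hθE, hθmul, hηhom, hηmul, hη1, hη2⟩
  have hd' : IsOrderPreserving2Cochain θ d := ⟨hd, hdop⟩
  have hdt : IsOrderPreserving2Cochain θ dt := hd'.strongNormalize hM
  have hc : ∀ x y z, coboundary₂ η dt x y z = c x y z := fun x y z => by
    rw [show dt = strongNormalize η d from rfl, coboundary₂_strongNormalize hM hd', hcdef]; rfl
  have hdtee : ∀ e ∈ E T, dt e e = θ e := fun e he => strongNormalize_apply_idem_idem hM hd' he
  refine ⟨hdt.r_eq, hdt.mono, fun t e he => ⟨?_, ?_⟩, hc⟩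
  · refine hdt.apply_idem_left hM he (hdtee e he) t ?_
    have h := (hnorm e t e he).1
    rwa [mul_self_of_mem_E he, ← hc] at h
  · refine hdt.apply_idem_right hM he (hdtee e he) t ?_
    have h := (hnorm t e e he).2.2
    rwa [mul_self_of_mem_E he, mul_assoc, mul_self_of_mem_E he, ← hc] at h

/-- If `c = δ²d` is a normalized order-preserving 3-coboundary, then
`d̃ = d · δ¹u` with `u(t) = d(t,t⁻¹)⁻¹` is a strongly normalized order-preserving
2-cochain with `δ²d̃ = c`. -/
theorem coboundary_of_strongly_normalized {T A : Type*}
    [InverseSemigroup T] [InverseSemigroup A]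
    (θ : T → A) (η : T → A → A)
    (hAcomm : ∀ a b : A, a * b = b * a)
    (hθE : ∀ e ∈ E T, θ e ∈ E A)
    (hθinj : ∀ e ∈ E T, ∀ f ∈ E T, θ e = θ f → e = f)
    (hθsurj : ∀ a ∈ E A, ∃ e ∈ E T, θ e = a)
    (hθmul : ∀ e ∈ E T, ∀ f ∈ E T, θ (e * f) = θ e * θ f)
    (hηhom : ∀ t u : T, ∀ a : A, η (t * u) a = η t (η u a))
    (hηmul : ∀ t : T, ∀ a b : A, η t (a * b) = η t a * η t b)
    (hη1 : ∀ e ∈ E T, ∀ a : A, η e a = θ e * a)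
    (hη2 : ∀ t : T, ∀ e ∈ E T, η t (θ e) = θ (t * e * t⁻¹))
    (d : T → T → A)
    (hd : ∀ x y : T, d x y * (d x y)⁻¹ = θ (r (x * y)))
    (hdop : ∀ x x' y y' : T, nle x x' → nle y y' → nle (d x y) (d x' y'))
    (c : T → T → T → A)
    (hcdef : ∀ x y z : T,
      c x y z = η x (d y z) * (d (x * y) z)⁻¹ * d x (y * z) * (d x y)⁻¹)
    (hnorm : ∀ x y : T, ∀ e ∈ E T,
      c e (e * x) y = θ (r (e * x * y)) ∧
      c (x * e) e (e * y) = θ (r (x * e * y)) ∧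
      c x (y * e) e = θ (r (x * y * e))) :
    let u : T → A := fun t => (d t t⁻¹)⁻¹
    let dt : T → T → A := fun x y => d x y * (η x (u y) * (u (x * y))⁻¹ * u x)
    (∀ x y : T, dt x y * (dt x y)⁻¹ = θ (r (x * y))) ∧
    (∀ x x' y y' : T, nle x x' → nle y y' → nle (dt x y) (dt x' y')) ∧
    (∀ t : T, ∀ e ∈ E T, dt e t = θ (r (e * t)) ∧ dt t e = θ (r (t * e))) ∧
    (∀ x y z : T,
      η x (dt y z) * (dt (x * y) z)⁻¹ * dt x (y * z) * (dt x y)⁻¹ = c x y z) :=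
  coboundary_of_strongly_normalized_general θ η hAcomm hθE hθmul hηhom hηmul hη1 hη2 d hd hdop c
    hcdef hnorm
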